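/- arXiv:1911.13256 — 4 statements merged into one kernel-verified Lean document; each statement's English description precedes it below -/
import Mathlib

section
/- (Calabi) Let n ≥ 2 and let q_1, q_2 be real quadratic forms on ℝ^{n+1}, with projective zero sets Γ_i = {[x] ∈ ℝP^n : q_i(x) = 0}. Then Γ_1 ∩ Γ_2 = ∅ if and only if there exist real numbers (λ_1, λ_2) ≠ (0,0) such that the quadratic form λ_1 q_1 + λ_2 q_2 is positive definite. Equivalently: Γ_1 ∩ Γ_2 ≠ ∅ if and only if no nontrivial linear combination λ_1 q_1 + λ_2 q_2 is positive definite. -/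
/-!
Write `f = q₁ + i q₂ : ℝ^{n+1} → ℂ`. If two nonzero vectors had opposite values, `f y = -t f x`
with `t > 0`, then `p = q₂(x) q₁ - q₁(x) q₂` vanishes at `x` and `y` while
`r = q₁(x) q₁ + q₂(x) q₂` changes sign between them. As `n ≥ 2`, `x` can be joined to `±y` inside
the cone `{p = 0} \ {0}` (by a segment, by two segments through a vector `w` polar-orthogonal to
both, or by an arc in `span {x, y, w}`), and the intermediate value theorem produces a common zero
of `q₁` and `q₂`.

So if `Γ₁ ∩ Γ₂ = ∅`, the image of the unit sphere under `f` is a compact connected subset of `ℂ`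
without opposite points. Its arguments then fill an interval of length `< π`, so it lies in an open
half-plane `{z | 0 < Re (z w̄)}`, and `Re w • q₁ + Im w • q₂` is positive definite.
-/

noncomputable section

/-- The quotient topology on a projectivization. -/
instance {K V : Type*} [DivisionRing K] [AddCommGroup V] [Module K V] [TopologicalSpace V] :
    TopologicalSpace (Projectivization K V) :=
  instTopologicalSpaceQuotient

/-- The projective zero set `{[x] ∈ ℝPⁿ : q x = 0}` of a real quadratic form `q` on
`ℝ^{n+1}`. -/
def projZeroSet {n : ℕ} (q : QuadraticForm ℝ (Fin (n + 1) → ℝ)) :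
    Set (Projectivization ℝ (Fin (n + 1) → ℝ)) :=
  {p | q p.rep = 0}

open Real ComplexConjugate Module Set QuadraticMap

namespace Complex

theorem eq_neg_ofReal_mul_of_arg_eq_add_pi {u v : ℂ} (hu : u ≠ 0) (h : arg v = arg u + π) :
    v = -((‖v‖ / ‖u‖ : ℝ) : ℂ) * u := by
  have hnu : (‖u‖ : ℂ) ≠ 0 := ofReal_ne_zero.2 (norm_ne_zero_iff.2 hu)
  calc v = ‖v‖ * exp (((arg u + π : ℝ) : ℂ) * I) := by rw [← h, norm_mul_exp_arg_mul_I]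
    _ = -((‖v‖ / ‖u‖ : ℝ) : ℂ) * (‖u‖ * exp (arg u * I)) := by
      push_cast
      rw [add_mul, exp_add, exp_pi_mul_I]
      field_simp
    _ = _ := by rw [norm_mul_exp_arg_mul_I]

theorem re_mul_exp_neg_mul_I (u : ℂ) (ψ : ℝ) :
    (u * exp (-(ψ * I))).re = ‖u‖ * Real.cos (arg u - ψ) := by
  conv_lhs => rw [← norm_mul_exp_arg_mul_I u]
  rw [mul_assoc, ← exp_add, re_ofReal_mul, ← sub_eq_add_neg, ← sub_mul, ← ofReal_sub,
    exp_ofReal_mul_I_re]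

theorem div_mem_slitPlane_of_forall_ne_neg_mul {z₁ z₂ : ℂ} (h₁ : z₁ ≠ 0) (h₂ : z₂ ≠ 0)
    (h : ∀ t : ℝ, 0 < t → z₂ ≠ -t * z₁) : z₂ / z₁ ∈ slitPlane := by
  by_contra hz
  rw [mem_slitPlane_iff, not_or, not_lt, not_not] at hz
  obtain ⟨hre, him⟩ := hz
  have hz₂ : z₂ = ((z₂ / z₁).re : ℂ) * z₁ := by
    rw [← div_eq_iff h₁]
    exact ext (by simp) (by simp [him])
  generalize (z₂ / z₁).re = s at hre hz₂
  rcases hre.lt_or_eq with hneg | rfl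
  · exact h (-s) (neg_pos.2 hneg) (by rw [hz₂]; push_cast; ring)
  · exact h₂ (by simpa using hz₂)

theorem exists_forall_re_mul_conj_pos {K : Set ℂ} (hKc : IsCompact K) (hK : IsConnected K)
    (hopp : ∀ z₁ ∈ K, ∀ z₂ ∈ K, ∀ t : ℝ, 0 < t → z₂ ≠ -t * z₁) :
    ∃ w : ℂ, ∀ z ∈ K, 0 < (z * conj w).re := by
  have h0 : ∀ z ∈ K, z ≠ 0 := fun z hz h => hopp z hz z hz 1 one_pos (by simp [h])
  obtain ⟨c, hc⟩ := hK.nonempty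
  have hc0 := h0 c hc
  set θ : ℂ → ℝ := fun z => arg (z / c)
  have hθ : ContinuousOn θ K := fun z hz =>
    ContinuousAt.comp_continuousWithinAt (f := fun z => z / c)
      (continuousAt_arg (div_mem_slitPlane_of_forall_ne_neg_mul hc0 (h0 z hz) (hopp c hc z hz)))
      (continuous_id.div_const c).continuousWithinAt
  obtain ⟨zm, hzm, hmin⟩ := hKc.exists_isMinOn hK.nonempty hθ
  obtain ⟨zM, hzM, hmax⟩ := hKc.exists_isMaxOn hK.nonempty hθ
  have hgap : θ zM < θ zm + π := by
    by_contra! hle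
    obtain ⟨z, hz, hθz⟩ := hK.isPreconnected.intermediate_value hzm hzM hθ
      ⟨by linarith [pi_pos], hle⟩
    have hzc := eq_neg_ofReal_mul_of_arg_eq_add_pi (div_ne_zero (h0 zm hzm) hc0) hθz
    refine hopp zm hzm z hz _ (div_pos (norm_pos_iff.2 (div_ne_zero (h0 z hz) hc0))
      (norm_pos_iff.2 (div_ne_zero (h0 zm hzm) hc0))) ?_
    rwa [div_eq_iff hc0, mul_assoc, div_mul_cancel₀ _ hc0] at hzc
  set ψ := (θ zm + θ zM) / 2 with hψ
  refine ⟨c * exp (ψ * I), fun z hz => ?_⟩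
  have hrot : z * conj (c * exp (ψ * I)) = z / c * exp (-(ψ * I)) * (normSq c : ℂ) := by
    rw [← mul_conj, map_mul, ← exp_conj, map_mul, conj_ofReal, conj_I]
    field_simp
  have hcos : 0 < Real.cos (θ z - ψ) := by
    have hm : θ zm ≤ θ z := hmin hz
    have hM : θ z ≤ θ zM := hmax hz
    exact Real.cos_pos_of_mem_Ioo ⟨by linarith, by linarith⟩
  rw [hrot, re_mul_ofReal, re_mul_exp_neg_mul_I]
  have := normSq_pos.2 hc0
  have := norm_pos_iff.2 (div_ne_zero (h0 z hz) hc0)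
  positivity

end Complex

namespace QuadraticMap

section Module

variable {E : Type*} [AddCommGroup E] [Module ℝ E]

theorem map_smul_add_smul (q : QuadraticForm ℝ E) (s t : ℝ) (a b : E) :
    q (s • a + t • b) = s * s * q a + t * t * q b + s * t * polar q a b := by
  rw [QuadraticMap.map_add (⇑q), QuadraticMap.map_smul, QuadraticMap.map_smul, polar_smul_left,
    polar_smul_right]
  simp only [smul_eq_mul]
  ring

theorem linearIndependent_pair_of_pos_of_neg (r : QuadraticForm ℝ E) {a b : E}
    (ha : 0 < r a) (hb : r b < 0) : LinearIndependent ℝ ![a, b] := by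
  refine LinearIndependent.pair_iff.2 fun s t hst => ?_
  have h := congrArg r (eq_neg_of_add_eq_zero_left hst)
  rw [QuadraticMap.map_neg, QuadraticMap.map_smul, QuadraticMap.map_smul, smul_eq_mul,
    smul_eq_mul] at h
  have hs : s * s * r a = 0 := le_antisymm (h ▸ mul_nonpos_of_nonneg_of_nonpos
    (mul_self_nonneg t) hb.le) (mul_nonneg (mul_self_nonneg s) ha.le)
  have ht : t * t * r b = 0 := h ▸ hs
  exact ⟨mul_self_eq_zero.1 ((mul_eq_zero.1 hs).resolve_right ha.ne'),
    mul_self_eq_zero.1 ((mul_eq_zero.1 ht).resolve_right hb.ne)⟩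

theorem exists_ne_zero_polar_eq_zero [FiniteDimensional ℝ E] (hE : 3 ≤ finrank ℝ E)
    (p : QuadraticForm ℝ E) (x y : E) :
    ∃ w ≠ 0, polar p x w = 0 ∧ polar p y w = 0 := by
  let L : E →ₗ[ℝ] ℝ × ℝ := (polarBilin p x).prod (polarBilin p y)
  have hker : LinearMap.ker L ≠ ⊥ :=
    LinearMap.ker_ne_bot_of_finrank_lt (by rw [finrank_prod, finrank_self]; omega)
  obtain ⟨w, hw, hw0⟩ := Submodule.exists_mem_ne_zero_of_ne_bot hker
  exact ⟨w, hw0, congrArg Prod.fst hw, congrArg Prod.snd hw⟩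

end Module

section Normed

variable {E : Type*} [NormedAddCommGroup E] [NormedSpace ℝ E]

theorem pos_of_forall_sphere_pos {q : QuadraticForm ℝ E}
    (h : ∀ x ∈ Metric.sphere (0 : E) 1, 0 < q x) {x : E} (hx : x ≠ 0) : 0 < q x := by
  have hnx : 0 < ‖x‖ := norm_pos_iff.2 hx
  have hxu : x = ‖x‖ • (‖x‖⁻¹ • x) := by rw [smul_smul, mul_inv_cancel₀ hnx.ne', one_smul]
  rw [hxu, QuadraticMap.map_smul, smul_eq_mul]
  refine mul_pos (mul_pos hnx hnx) (h _ ?_)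
  rw [mem_sphere_zero_iff_norm, norm_smul, norm_inv, norm_norm, inv_mul_cancel₀ hnx.ne']

variable [FiniteDimensional ℝ E]

theorem continuous_of_finiteDimensional (q : QuadraticForm ℝ E) : Continuous q := by
  let B : E →L[ℝ] E →L[ℝ] ℝ :=
    LinearMap.toContinuousLinearMap (LinearMap.toContinuousLinearMap.toLinearMap ∘ₗ associated q)
  convert B.continuous₂.comp (continuous_id.prodMk continuous_id) using 1
  ext x
  exact (associated_eq_self_apply ℝ q x).symm

variable {p r : QuadraticForm ℝ E}

theorem exists_common_zero_of_path {γ : ℝ → E} (hγ : ContinuousOn γ (Icc 0 1))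
    (hp : ∀ t ∈ Icc (0 : ℝ) 1, p (γ t) = 0) (hne : ∀ t ∈ Icc (0 : ℝ) 1, γ t ≠ 0)
    (h0 : 0 ≤ r (γ 0)) (h1 : r (γ 1) ≤ 0) : ∃ z ≠ 0, p z = 0 ∧ r z = 0 := by
  obtain ⟨t, ht, hrt⟩ := intermediate_value_Icc' zero_le_one
    ((continuous_of_finiteDimensional r).comp_continuousOn hγ) ⟨h1, h0⟩
  exact ⟨γ t, hne t ht, hp t ht, hrt⟩

theorem exists_common_zero_of_isotropic_pair {a b : E} (hpa : p a = 0) (hpb : p b = 0)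
    (hab : polar p a b = 0) (hra : 0 < r a) (hrb : r b < 0) : ∃ z ≠ 0, p z = 0 ∧ r z = 0 := by
  have hind := LinearIndependent.pair_iff.1 (linearIndependent_pair_of_pos_of_neg r hra hrb)
  refine exists_common_zero_of_path (γ := fun t => (1 - t) • a + t • b) (by fun_prop)
    (fun t _ => ?_) (fun t _ h => ?_) (by simpa using hra.le) (by simpa using hrb.le)
  · rw [map_smul_add_smul, hpa, hpb, hab]
    ring
  · obtain ⟨h1, h2⟩ := hind _ _ h
    linarith

theorem exists_common_zero_of_polar_mul_neg {x y w : E} (hpx : p x = 0) (hpy : p y = 0)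
    (hxw : polar p x w = 0) (hyw : polar p y w = 0) (hneg : polar p x y * p w < 0)
    (hrx : 0 ≤ r x) (hry : r y ≤ 0) : ∃ z ≠ 0, p z = 0 ∧ r z = 0 := by
  have hc : polar p x y ≠ 0 := by rintro hc; simp [hc] at hneg
  have hw : p w ≠ 0 := by rintro hw; simp [hw] at hneg
  set k := -polar p x y / p w
  have hkw : k * p w = -polar p x y := div_mul_cancel₀ _ hw
  have hk : 0 ≤ k := by
    have : 0 < k * (p w * p w) := by rw [← mul_assoc, hkw]; linarith
    exact (pos_of_mul_pos_left this (mul_self_nonneg _)).le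
  -- `k` is chosen so that the `w`-term cancels the cross term `t (1 - t) polar p x y`.
  refine exists_common_zero_of_path
    (γ := fun t => (1 - t) • x + t • y + √(k * (t * (1 - t))) • w) (by fun_prop)
    (fun t ht => ?_) (fun t _ h => ?_) (by simpa using hrx) (by simpa using hry)
  · have hkt : 0 ≤ k * (t * (1 - t)) := mul_nonneg hk (mul_nonneg ht.1 (by linarith [ht.2]))
    rw [QuadraticMap.map_add (⇑p), map_smul_add_smul, QuadraticMap.map_smul, polar_add_left,
      polar_smul_left, polar_smul_left, polar_smul_right, polar_smul_right, hxw, hyw, hpx, hpy,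
      smul_eq_mul, Real.mul_self_sqrt hkt]
    simp only [smul_eq_mul]
    linear_combination (t * (1 - t)) * hkw
  · have hx := congrArg (polar p x) h
    have hy := congrArg (polar p y) h
    simp only [polar_add_right, polar_smul_right, polar_self, hpx, hpy, hxw, hyw,
      polar_zero_right, smul_eq_mul] at hx hy
    rw [polar_comm] at hy
    have h1 : t = 0 := by simpa [hc] using hx
    have h2 : 1 - t = 0 := by simpa [hc] using hy
    linarith

theorem exists_common_zero_of_pos_of_neg (hE : 3 ≤ finrank ℝ E) {x y : E} (hpx : p x = 0)
    (hpy : p y = 0) (hrx : 0 < r x) (hry : r y < 0) : ∃ z ≠ 0, p z = 0 ∧ r z = 0 := by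
  obtain ⟨w, hw0, hxw, hyw⟩ := exists_ne_zero_polar_eq_zero hE p x y
  rcases lt_trichotomy (polar p x y * p w) 0 with hneg | hzero | hpos
  · exact exists_common_zero_of_polar_mul_neg hpx hpy hxw hyw hneg hrx.le hry.le
  · rcases mul_eq_zero.1 hzero with hxy | hpw
    · exact exists_common_zero_of_isotropic_pair hpx hpy hxy hrx hry
    rcases lt_trichotomy (r w) 0 with hrw | hrw | hrw
    · exact exists_common_zero_of_isotropic_pair hpx hpw hxw hrx hrw
    · exact ⟨w, hw0, hpw, hrw⟩
    · exact exists_common_zero_of_isotropic_pair hpw hpy (by rwa [polar_comm]) hrw hry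
  · refine exists_common_zero_of_polar_mul_neg (y := -y) hpx (by rwa [QuadraticMap.map_neg]) hxw
      (by rw [polar_neg_left, hyw, neg_zero]) (by rw [polar_neg_right]; linarith) hrx.le
      (by rw [QuadraticMap.map_neg]; exact hry.le)

theorem exists_common_zero_of_eq_neg_mul (hE : 3 ≤ finrank ℝ E) {q₁ q₂ : QuadraticForm ℝ E}
    {x y : E} (hx : x ≠ 0) {t : ℝ} (ht : 0 < t) (h₁ : q₁ y = -t * q₁ x) (h₂ : q₂ y = -t * q₂ x) :
    ∃ z ≠ 0, q₁ z = 0 ∧ q₂ z = 0 := by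
  by_cases h0 : q₁ x = 0 ∧ q₂ x = 0
  · exact ⟨x, hx, h0⟩
  have hs : 0 < q₁ x * q₁ x + q₂ x * q₂ x :=
    (add_nonneg (mul_self_nonneg _) (mul_self_nonneg _)).lt_of_ne
      fun h => h0 (mul_self_add_mul_self_eq_zero.1 h.symm)
  obtain ⟨z, hz, hpz, hrz⟩ := exists_common_zero_of_pos_of_neg hE
    (p := q₂ x • q₁ - q₁ x • q₂) (r := q₁ x • q₁ + q₂ x • q₂) (x := x) (y := y)
    (by simp only [sub_apply, smul_apply, smul_eq_mul]; ring)
    (by simp only [sub_apply, smul_apply, smul_eq_mul, h₁, h₂]; ring)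
    (by simpa only [add_apply, smul_apply, smul_eq_mul] using hs)
    (by simp only [add_apply, smul_apply, smul_eq_mul, h₁, h₂]; nlinarith)
  simp only [sub_apply, add_apply, smul_apply, smul_eq_mul] at hpz hrz
  refine ⟨z, hz, ?_, ?_⟩
  · refine (mul_eq_zero.1 (?_ : q₁ z * _ = 0)).resolve_right hs.ne'
    linear_combination q₁ x * hrz + q₂ x * hpz
  · refine (mul_eq_zero.1 (?_ : q₂ z * _ = 0)).resolve_right hs.ne'
    linear_combination q₂ x * hrz - q₁ x * hpz

theorem exists_pos_combination_of_no_common_zero (hE : 3 ≤ finrank ℝ E)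
    {q₁ q₂ : QuadraticForm ℝ E} (h : ∀ x ≠ 0, ¬(q₁ x = 0 ∧ q₂ x = 0)) :
    ∃ a b : ℝ, ¬(a = 0 ∧ b = 0) ∧ ∀ x ≠ 0, 0 < (a • q₁ + b • q₂) x := by
  let f : E → ℂ := fun x => q₁ x + q₂ x * Complex.I
  have hf : Continuous f := by
    have := continuous_of_finiteDimensional q₁
    have := continuous_of_finiteDimensional q₂
    fun_prop
  have hS : IsConnected (Metric.sphere (0 : E) 1) := isConnected_sphere
    (by rw [← finrank_eq_rank]; exact_mod_cast (by omega : 1 < finrank ℝ E)) 0 zero_le_one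
  have hopp : ∀ z₁ ∈ f '' Metric.sphere 0 1, ∀ z₂ ∈ f '' Metric.sphere 0 1, ∀ t : ℝ, 0 < t →
      z₂ ≠ -t * z₁ := by
    rintro _ ⟨x, hx, rfl⟩ _ ⟨y, -, rfl⟩ t ht hxy
    obtain ⟨z, hz, hz0⟩ := exists_common_zero_of_eq_neg_mul hE (ne_zero_of_mem_unit_sphere ⟨x, hx⟩)
      ht (by simpa [f] using congrArg Complex.re hxy) (by simpa [f] using congrArg Complex.im hxy)
    exact h z hz hz0
  obtain ⟨w, hw⟩ := Complex.exists_forall_re_mul_conj_pos ((isCompact_sphere 0 1).image hf)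
    (hS.image f hf.continuousOn) hopp
  have hwf : ∀ x, (f x * conj w).re = (w.re • q₁ + w.im • q₂) x := fun x => by
    simp [f, Complex.mul_re, mul_comm]
  refine ⟨w.re, w.im, ?_, fun x hx => pos_of_forall_sphere_pos
    (fun y hy => hwf y ▸ hw _ (mem_image_of_mem f hy)) hx⟩
  rintro ⟨h₁, h₂⟩
  obtain ⟨y, hy⟩ := hS.nonempty
  simpa [hwf, h₁, h₂] using hw _ (mem_image_of_mem f hy)

end Normed

end QuadraticMap

theorem mem_projZeroSet_mk {n : ℕ} (q : QuadraticForm ℝ (Fin (n + 1) → ℝ))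
    {x : Fin (n + 1) → ℝ} (hx : x ≠ 0) : Projectivization.mk ℝ x hx ∈ projZeroSet q ↔ q x = 0 := by
  obtain ⟨u, hu⟩ := Projectivization.exists_smul_eq_mk_rep ℝ x hx
  change q (Projectivization.mk ℝ x hx).rep = 0 ↔ _
  rw [← hu, Units.smul_def, QuadraticMap.map_smul, smul_eq_mul, mul_eq_zero,
    or_iff_right (mul_self_ne_zero.2 u.ne_zero)]

theorem projZeroSet_inter_eq_empty_iff {n : ℕ} (q₁ q₂ : QuadraticForm ℝ (Fin (n + 1) → ℝ)) :
    projZeroSet q₁ ∩ projZeroSet q₂ = ∅ ↔ ∀ x ≠ 0, ¬(q₁ x = 0 ∧ q₂ x = 0) := by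
  simp only [eq_empty_iff_forall_notMem, mem_inter_iff]
  refine ⟨fun h x hx => ?_, fun h => Projectivization.ind fun x hx => ?_⟩
  · simpa only [mem_projZeroSet_mk] using h (Projectivization.mk ℝ x hx)
  · simpa only [mem_projZeroSet_mk] using h x hx

/-- (Calabi) For `n ≥ 2` and real quadratic forms `q₁, q₂` on `ℝ^{n+1}` with projective
zero sets `Γ₁, Γ₂ ⊆ ℝPⁿ`: `Γ₁ ∩ Γ₂ = ∅` if and only if some nontrivial linear combination
`λ₁ q₁ + λ₂ q₂` is positive definite. -/
theorem calabi (n : ℕ) (hn : 2 ≤ n) (q₁ q₂ : QuadraticForm ℝ (Fin (n + 1) → ℝ)) :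
    projZeroSet q₁ ∩ projZeroSet q₂ = ∅ ↔
      ∃ a b : ℝ, ¬(a = 0 ∧ b = 0) ∧
        ∀ x : Fin (n + 1) → ℝ, x ≠ 0 → 0 < (a • q₁ + b • q₂) x := by
  rw [projZeroSet_inter_eq_empty_iff]
  refine ⟨QuadraticMap.exists_pos_combination_of_no_common_zero
    (by rw [finrank_fin_fun]; omega), ?_⟩
  rintro ⟨a, b, -, hpos⟩ x hx ⟨h₁, h₂⟩
  simpa [h₁, h₂] using hpos x hx
end
end

section
/- Let X be a topological space and let A_1, …, A_s be nonempty closed connected subsets of X. Let H be the graph with vertex set {1, …, s} and an edge between distinct i and j if and only if A_i ∩ A_j ≠ ∅. Then the number of connected components of the topological space A_1 ∪ ⋯ ∪ A_s equals the number of connected components of the graph H. -/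
open Set


/-- Let `X` be a topological space and `A_1, …, A_s` nonempty closed connected subsets of
`X`. Let `H` be the graph on `{1, …, s}` with an edge between distinct `i, j` iff
`A_i ∩ A_j ≠ ∅`. Then the number of connected components of the space `A_1 ∪ ⋯ ∪ A_s`
equals the number of connected components of `H`. -/
theorem components_of_union_eq_graph_components (X : Type*) [TopologicalSpace X]
    (s : ℕ) (A : Fin s → Set X)
    (hcl : ∀ i, IsClosed (A i)) (hconn : ∀ i, IsConnected (A i)) :
    Nat.card (ConnectedComponents ((⋃ i, A i) : Set X)) =
      Nat.card (SimpleGraph.fromRel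
        (fun i j : Fin s => (A i ∩ A j).Nonempty)).ConnectedComponent := by
  classical
  set Y := ((⋃ i, A i) : Set X)
  set G := SimpleGraph.fromRel (fun i j : Fin s => (A i ∩ A j).Nonempty) with hG
  -- preimage of A i in Y is preconnected
  have hpre : ∀ i, IsPreconnected ((Subtype.val ⁻¹' A i : Set Y)) := by
    intro i
    rw [← Topology.IsInducing.subtypeVal.isPreconnected_image]
    have : Subtype.val '' (Subtype.val ⁻¹' A i : Set Y) = A i := by
      rw [Subtype.image_preimage_coe]
      exact inter_eq_right.mpr (subset_iUnion A i)
    rw [this]; exact (hconn i).isPreconnected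
  have same : ∀ i (x y : Y), (x : X) ∈ A i → (y : X) ∈ A i →
      (ConnectedComponents.mk x) = ConnectedComponents.mk y := by
    intro i x y hx hy
    rw [ConnectedComponents.coe_eq_coe']
    exact ((hpre i).subset_connectedComponent hy hx)
  -- a point in each A i, as element of Y
  have hmem : ∀ i, (hconn i).nonempty.choose ∈ A i := fun i => (hconn i).nonempty.choose_spec
  let p : Fin s → Y := fun i => ⟨(hconn i).nonempty.choose, mem_iUnion.mpr ⟨i, hmem i⟩⟩
  -- key: same topological component → reachable
  have key : ∀ (i j : Fin s) (x y : Y), (x : X) ∈ A i → (y : X) ∈ A j →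
      ConnectedComponents.mk x = ConnectedComponents.mk y → G.Reachable i j := by
    intro i j x y hx hy hxy
    set S : Set (Fin s) := {k | G.Reachable i k}
    set U : Set Y := ⋃ k ∈ S, Subtype.val ⁻¹' A k with hU
    have hUc : ∀ (T : Set (Fin s)), IsClosed (⋃ k ∈ T, (Subtype.val ⁻¹' A k : Set Y)) := by
      intro T
      exact T.toFinite.isClosed_biUnion fun k _ =>
        (hcl k).preimage continuous_subtype_val
    have hcompl : Uᶜ = ⋃ k ∈ Sᶜ, (Subtype.val ⁻¹' A k : Set Y) := by
      ext z
      constructor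
      · intro hz
        obtain ⟨k, hk⟩ := mem_iUnion.mp z.2
        refine mem_iUnion₂.mpr ⟨k, ?_, hk⟩
        intro hkS
        exact hz (mem_iUnion₂.mpr ⟨k, hkS, hk⟩)
      · intro hz hz'
        obtain ⟨k, hkS, hk⟩ := mem_iUnion₂.mp hz
        obtain ⟨m, hmS, hm⟩ := mem_iUnion₂.mp hz'
        apply hkS
        rcases eq_or_ne m k with rfl | hne
        · exact hmS
        · exact hmS.trans (SimpleGraph.Adj.reachable (by
            simp only [hG, SimpleGraph.fromRel_adj]
            exact ⟨hne, Or.inl ⟨z, hm, hk⟩⟩))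
    have hclopen : IsClopen U := by
      constructor
      · exact hUc S
      · rw [← isClosed_compl_iff, hcompl]; exact hUc Sᶜ
    have hxU : x ∈ U := mem_iUnion₂.mpr ⟨i, SimpleGraph.Reachable.refl i, hx⟩
    have hyU : y ∈ U := by
      have : y ∈ connectedComponent x := by
        rw [← ConnectedComponents.coe_eq_coe'] at *
        exact hxy.symm
      exact hclopen.connectedComponent_subset hxU this
    obtain ⟨k, hkS, hk⟩ := mem_iUnion₂.mp hyU
    refine hkS.trans ?_
    rcases eq_or_ne k j with rfl | hne
    · exact SimpleGraph.Reachable.refl k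
    · exact SimpleGraph.Adj.reachable (by
        simp only [hG, SimpleGraph.fromRel_adj]
        exact ⟨hne, Or.inl ⟨y, hk, hy⟩⟩)
  -- define the map from graph components to topological components
  have hresp : ∀ i j : Fin s, G.Adj i j →
      ConnectedComponents.mk (p i) = ConnectedComponents.mk (p j) := by
    intro i j hij
    rw [hG, SimpleGraph.fromRel_adj] at hij
    obtain ⟨hne, h | h⟩ := hij
    · obtain ⟨z, hzi, hzj⟩ := h
      have hzY : z ∈ Y := mem_iUnion.mpr ⟨i, hzi⟩
      exact (same i (p i) ⟨z, hzY⟩ (hmem i) hzi).trans (same j ⟨z, hzY⟩ (p j) hzj (hmem j))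
    · obtain ⟨z, hzj, hzi⟩ := h
      have hzY : z ∈ Y := mem_iUnion.mpr ⟨i, hzi⟩
      exact (same i (p i) ⟨z, hzY⟩ (hmem i) hzi).trans (same j ⟨z, hzY⟩ (p j) hzj (hmem j))
  let F : G.ConnectedComponent → ConnectedComponents Y :=
    SimpleGraph.ConnectedComponent.lift (fun i => ConnectedComponents.mk (p i))
      (by
        intro i j w hw
        clear hw
        induction w with
        | nil => rfl
        | cons h _ ih => exact (hresp _ _ h).trans ih)
  have hFsurj : Function.Surjective F := by
    intro c
    obtain ⟨y, rfl⟩ := ConnectedComponents.surjective_coe c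
    obtain ⟨i, hi⟩ := mem_iUnion.mp y.2
    exact ⟨SimpleGraph.connectedComponentMk G i, same i (p i) y (hmem i) hi⟩
  have hFinj : Function.Injective F := by
    intro c d
    obtain ⟨i, rfl⟩ := c.exists_rep
    obtain ⟨j, rfl⟩ := d.exists_rep
    intro h
    exact SimpleGraph.ConnectedComponent.sound (key i j (p i) (p j) (hmem i) (hmem j) h)
  exact (Nat.card_eq_of_bijective F ⟨hFinj, hFsurj⟩).symm
end

section
/- Let n ≥ 2 and let q be any real quadratic form on ℝ^{n+1}. If the projective zero set Z(q) = {[x] ∈ ℝP^n : q(x) = 0} is nonempty, then Z(q) is a connected subset of ℝP^n. -/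
noncomputable section

namespace QuadricAux

open QuadraticMap

variable {n : ℕ} (q : QuadraticForm ℝ (Fin (n + 1) → ℝ))

lemma mem_mk_iff (x : Fin (n + 1) → ℝ) (hx : x ≠ 0) :
    Projectivization.mk ℝ x hx ∈ projZeroSet q ↔ q x = 0 := by
  obtain ⟨a, ha⟩ := Projectivization.exists_smul_eq_mk_rep ℝ x hx
  have key : q (Projectivization.mk ℝ x hx).rep = (a : ℝ) * (a : ℝ) * q x := by
    rw [← ha, Units.smul_def, QuadraticMap.map_smul, smul_eq_mul]
  have ha0 : (a : ℝ) ≠ 0 := a.ne_zero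
  constructor
  · intro hmem
    have : (a : ℝ) * (a : ℝ) * q x = 0 := by rw [← key]; exact hmem
    rcases mul_eq_zero.1 this with h' | h'
    · exact absurd h' (mul_ne_zero ha0 ha0)
    · exact h'
  · intro hqx
    show q (Projectivization.mk ℝ x hx).rep = 0
    rw [key, hqx, mul_zero]

lemma expand2 (a b : Fin (n + 1) → ℝ) (s t : ℝ) :
    q (s • a + t • b) = s * s * q a + t * t * q b + s * t * polar q a b := by
  rw [QuadraticMap.map_add q (s • a) (t • b), QuadraticMap.map_smul, QuadraticMap.map_smul,
    polar_smul_left, polar_smul_right, smul_eq_mul, smul_eq_mul, smul_eq_mul, smul_eq_mul]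
  ring

lemma expand3 (a b c : Fin (n + 1) → ℝ) (s t u : ℝ) :
    q (s • a + t • b + u • c) = s * s * q a + t * t * q b + u * u * q c
      + s * t * polar q a b + s * u * polar q a c + t * u * polar q b c := by
  rw [QuadraticMap.map_add q (s • a + t • b) (u • c), expand2, QuadraticMap.map_smul,
    polar_add_left, polar_smul_left, polar_smul_left, polar_smul_right, polar_smul_right]
  simp only [smul_eq_mul]
  ring

/-- A continuous family of isotropic nonzero vectors gives a `JoinedIn` in the quadric. -/
lemma joinedIn_aux (f : ℝ → (Fin (n + 1) → ℝ)) (hcont : Continuous f)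
    (hf : ∀ r : ℝ, f r ≠ 0) (hq : ∀ r : ℝ, 0 ≤ r → r ≤ 1 → q (f r) = 0)
    (x y : Projectivization ℝ (Fin (n + 1) → ℝ))
    (hx : Projectivization.mk ℝ (f 0) (hf 0) = x)
    (hy : Projectivization.mk ℝ (f 1) (hf 1) = y) :
    JoinedIn (projZeroSet q) x y := by
  refine ⟨⟨⟨fun t => Projectivization.mk ℝ (f t) (hf t), ?_⟩, hx, hy⟩, ?_⟩
  · exact continuous_quotient_mk'.comp
      ((hcont.comp continuous_subtype_val).subtype_mk fun t => hf t)
  · intro t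
    exact (mem_mk_iff q _ _).2 (hq t t.2.1 t.2.2)

/-- Straight-line path in the quadric. -/
lemma joinedIn_segment (a b : Fin (n + 1) → ℝ)
    (ha : q a = 0) (hb : q b = 0) (hpol : polar q a b = 0)
    (hind : ∀ s t : ℝ, s • a + t • b = 0 → s = 0 ∧ t = 0)
    (ha0 : a ≠ 0) (hb0 : b ≠ 0) :
    JoinedIn (projZeroSet q) (Projectivization.mk ℝ a ha0) (Projectivization.mk ℝ b hb0) := by
  have hf : ∀ r : ℝ, (1 - r) • a + r • b ≠ 0 := by
    intro r h
    obtain ⟨h1, h2⟩ := hind _ _ h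
    rw [h2] at h1; norm_num at h1
  refine joinedIn_aux q (fun r => (1 - r) • a + r • b) (by fun_prop) hf ?_ _ _ ?_ ?_
  · intro r _ _
    rw [expand2, ha, hb, hpol]; ring
  · rw [Projectivization.mk_eq_mk_iff]
    exact ⟨1, by norm_num⟩
  · rw [Projectivization.mk_eq_mk_iff]
    exact ⟨1, by norm_num⟩

/-- Curved path in the quadric through the direction `c` with `q c ≠ 0`. -/
lemma joinedIn_curve (a b c : Fin (n + 1) → ℝ)
    (ha : q a = 0) (hb : q b = 0) (hγ : q c ≠ 0) (hβ : polar q a b ≠ 0)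
    (hac : polar q a c = 0) (hbc : polar q b c = 0)
    (hind : ∀ s t u : ℝ, s • a + t • b + u • c = 0 → s = 0 ∧ t = 0 ∧ u = 0)
    (ha0 : a ≠ 0) (hb0 : b ≠ 0) :
    JoinedIn (projZeroSet q) (Projectivization.mk ℝ a ha0) (Projectivization.mk ℝ b hb0) := by
  set β := polar q a b with hβdef
  set γ := q c with hγdef
  set ε : ℝ := if 0 ≤ β / γ then (-1 : ℝ) else 1 with hε
  have hε0 : ε ≠ 0 := by
    rw [hε]; split_ifs <;> norm_num
  have hk : 0 ≤ -ε * (β / γ) := by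
    rw [hε]; split_ifs with h
    · simpa using h
    · push_neg at h
      nlinarith
  set f : ℝ → (Fin (n + 1) → ℝ) :=
    fun r => (1 - r) • a + (ε * r) • b + Real.sqrt (r * (1 - r) * (-ε * (β / γ))) • c with hfdef
  have hf : ∀ r : ℝ, f r ≠ 0 := by
    intro r h
    obtain ⟨h1, h2, _⟩ := hind _ _ _ h
    have hr1 : r = 1 := by linarith
    rw [hr1, mul_one] at h2
    exact hε0 h2
  refine joinedIn_aux q f (by fun_prop) hf ?_ _ _ ?_ ?_
  · intro r hr0 hr1
    have harg : 0 ≤ r * (1 - r) * (-ε * (β / γ)) := by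
      have : 0 ≤ r * (1 - r) := by nlinarith
      exact mul_nonneg this hk
    rw [hfdef]
    simp only
    rw [expand3, ha, hb, hac, hbc, Real.mul_self_sqrt harg]
    field_simp
    ring
  · rw [Projectivization.mk_eq_mk_iff]
    refine ⟨1, ?_⟩
    rw [hfdef]
    norm_num
  · rw [Projectivization.mk_eq_mk_iff]
    refine ⟨Units.mk0 ε hε0, ?_⟩
    rw [hfdef]
    norm_num [Units.smul_def]

end QuadricAux

open QuadraticMap in
/-- For `n ≥ 2` and any real quadratic form `q` on `ℝ^{n+1}`, if the projective zero set
`Z(q) ⊆ ℝPⁿ` is nonempty then it is connected. -/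
theorem quadric_zero_set_connected (n : ℕ) (hn : 2 ≤ n)
    (q : QuadraticForm ℝ (Fin (n + 1) → ℝ)) (h : (projZeroSet q).Nonempty) :
    IsConnected (projZeroSet q) := by
  classical
  obtain ⟨p₀, hp₀⟩ := h
  have key : ∀ p₁ ∈ projZeroSet q, ∀ p₂ ∈ projZeroSet q,
      JoinedIn (projZeroSet q) p₁ p₂ := by
    intro p₁ h₁ p₂ h₂
    set a := p₁.rep with hadef
    set b := p₂.rep with hbdef
    have ha0 : a ≠ 0 := p₁.rep_nonzero
    have hb0 : b ≠ 0 := p₂.rep_nonzero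
    have ha : q a = 0 := h₁
    have hb : q b = 0 := h₂
    have hmka : Projectivization.mk ℝ a ha0 = p₁ := Projectivization.mk_rep p₁
    have hmkb : Projectivization.mk ℝ b hb0 = p₂ := Projectivization.mk_rep p₂
    rw [← hmka, ← hmkb]
    by_cases hdep : ∀ s t : ℝ, s • a + t • b = 0 → s = 0 ∧ t = 0
    · by_cases hpol : polar q a b = 0
      · exact QuadricAux.joinedIn_segment q a b ha hb hpol hdep ha0 hb0
      · -- find c orthogonal to both a and b
        set φ : (Fin (n + 1) → ℝ) →ₗ[ℝ] ℝ × ℝ :=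
          (polarBilin q a).prod (polarBilin q b) with hφ
        have hker : LinearMap.ker φ ≠ ⊥ := by
          intro hbot
          have hinj : Function.Injective φ := LinearMap.ker_eq_bot.1 hbot
          have := LinearMap.finrank_le_finrank_of_injective hinj
          simp [Module.finrank_prod] at this
          omega
        obtain ⟨c, hcmem, hc0⟩ := (Submodule.ne_bot_iff _).1 hker
        have hφc : φ c = 0 := hcmem
        have hac : polar q a c = 0 := congrArg Prod.fst hφc
        have hbc : polar q b c = 0 := congrArg Prod.snd hφc
        by_cases hγ : q c = 0
        · -- go through c with two segments
          have haa : polar q a a = 0 := by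
            rw [polar_self, ha]; simp
          have hbb : polar q b b = 0 := by
            rw [polar_self, hb]; simp
          have hindac : ∀ s t : ℝ, s • a + t • c = 0 → s = 0 ∧ t = 0 := by
            intro s t hst
            have h1 : polar q b (s • a + t • c) = 0 := by rw [hst]; simp [polar]
            rw [polar_add_right, polar_smul_right, polar_smul_right, polar_comm q b a, hbc] at h1
            have hs : s = 0 := by
              simp only [smul_eq_mul, mul_zero, add_zero] at h1
              rcases mul_eq_zero.1 h1 with h' | h'
              · exact h'
              · exact absurd h' hpol
            refine ⟨hs, ?_⟩
            rw [hs, zero_smul, zero_add] at hst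
            by_contra ht
            exact hc0 (by simpa [ht] using congrArg (fun v => t⁻¹ • v) hst)
          have hindcb : ∀ s t : ℝ, s • c + t • b = 0 → s = 0 ∧ t = 0 := by
            intro s t hst
            have h1 : polar q a (s • c + t • b) = 0 := by rw [hst]; simp [polar]
            rw [polar_add_right, polar_smul_right, polar_smul_right, hac] at h1
            have ht : t = 0 := by
              simp only [smul_eq_mul, mul_zero, zero_add] at h1
              rcases mul_eq_zero.1 h1 with h' | h'
              · exact h'
              · exact absurd h' hpol
            refine ⟨?_, ht⟩
            rw [ht, zero_smul, add_zero] at hst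
            by_contra hs
            exact hc0 (by simpa [hs] using congrArg (fun v => s⁻¹ • v) hst)
          exact (QuadricAux.joinedIn_segment q a c ha hγ hac hindac ha0 hc0).trans
            (QuadricAux.joinedIn_segment q c b hγ hb (by rw [polar_comm]; exact hbc)
              hindcb hc0 hb0)
        · -- curved path
          have hind3 : ∀ s t u : ℝ, s • a + t • b + u • c = 0 → s = 0 ∧ t = 0 ∧ u = 0 := by
            intro s t u hstu
            have haa : polar q a a = 0 := by rw [polar_self, ha]; simp
            have hbb : polar q b b = 0 := by rw [polar_self, hb]; simp
            have h1 : polar q a (s • a + t • b + u • c) = 0 := by rw [hstu]; simp [polar]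
            have h2 : polar q b (s • a + t • b + u • c) = 0 := by rw [hstu]; simp [polar]
            rw [polar_add_right, polar_add_right, polar_smul_right, polar_smul_right,
              polar_smul_right, haa, hac] at h1
            rw [polar_add_right, polar_add_right, polar_smul_right, polar_smul_right,
              polar_smul_right, hbb, polar_comm q b a, hbc] at h2
            simp only [smul_eq_mul, mul_zero, add_zero, zero_add] at h1 h2
            have ht : t = 0 := by
              rcases mul_eq_zero.1 h1 with h' | h'
              · exact h'
              · exact absurd h' hpol
            have hs : s = 0 := by
              rcases mul_eq_zero.1 h2 with h' | h'
              · exact h'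
              · exact absurd h' hpol
            refine ⟨hs, ht, ?_⟩
            rw [hs, ht, zero_smul, zero_smul, zero_add, zero_add] at hstu
            by_contra hu
            exact hc0 (by simpa [hu] using congrArg (fun v => u⁻¹ • v) hstu)
          exact QuadricAux.joinedIn_curve q a b c ha hb hγ hpol hac hbc hind3 ha0 hb0
    · -- a and b are parallel
      push_neg at hdep
      obtain ⟨s, t, hst, hne⟩ := hdep
      have : Projectivization.mk ℝ a ha0 = Projectivization.mk ℝ b hb0 := by
        rw [Projectivization.mk_eq_mk_iff']
        by_cases hs : s = 0
        · exfalso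
          rw [hs, zero_smul, zero_add] at hst
          have ht : t ≠ 0 := hne hs
          exact hb0 (by simpa [ht] using congrArg (fun v => t⁻¹ • v) hst)
        · refine ⟨-(t / s), ?_⟩
          have hsa : s • a = (-t) • b := by
            rw [neg_smul, ← add_eq_zero_iff_eq_neg]; exact hst
          have h2 : s • ((-(t / s)) • b) = s • a := by
            rw [hsa, smul_smul]
            congr 1
            field_simp
          exact smul_right_injective _ hs h2
      rw [this]
      exact JoinedIn.refl ((QuadricAux.mem_mk_iff q b hb0).2 hb)
  have hpc : IsPathConnected (projZeroSet q) := ⟨p₀, hp₀, fun {y} hy => key p₀ hp₀ y hy⟩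
  exact hpc.isConnected
end
end

section
/- Let K ⊆ ℝ^N be a nonempty compact convex set and let ε > 0. Then there exists a compact convex set C with smooth boundary such that K ⊆ C ⊆ K(ε); here 'C has smooth boundary' means there is a C^∞ function f : ℝ^N → ℝ with C = {x : f(x) ≤ 0} and with derivative Df(x) ≠ 0 at every x with f(x) = 0. -/
open RealInnerProductSpace Metric

section Aux

variable {E : Type*} [NormedAddCommGroup E] [InnerProductSpace ℝ E]

lemma aux_convexOn_exp_inner (v : E) (T c : ℝ) :
    ConvexOn ℝ Set.univ (fun x : E => Real.exp (T * (⟪v, x⟫ - c))) := by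
  let A : E →ᵃ[ℝ] ℝ :=
    { toFun := fun x => T * (⟪v, x⟫ - c)
      linear := T • ((innerSL ℝ v : E →L[ℝ] ℝ) : E →ₗ[ℝ] ℝ)
      map_vadd' := by
        intro p w
        simp [inner_add_right]
        ring }
  have h := convexOn_exp.comp_affineMap A
  rw [Set.preimage_univ] at h
  exact h

lemma aux_convexOn_sum {ι : Type*} (s : Finset ι) (F : ι → E → ℝ)
    (h : ∀ i ∈ s, ConvexOn ℝ Set.univ (F i)) :
    ConvexOn ℝ Set.univ (fun x => ∑ i ∈ s, F i x) := by
  classical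
  induction s using Finset.induction_on with
  | empty => simpa using convexOn_const (0:ℝ) convex_univ
  | insert _ _ hnotmem ih =>
    rename_i a t
    simp only [Finset.sum_insert hnotmem]
    exact (h a (Finset.mem_insert_self a t)).add
      (ih fun i hi => h i (Finset.mem_insert_of_mem hi))

lemma aux_contDiff_exp_inner (v : E) (T c : ℝ) :
    ContDiff ℝ (⊤ : ℕ∞) (fun x : E => Real.exp (T * (⟪v, x⟫ - c))) :=
  Real.contDiff_exp.comp
    (contDiff_const.mul (((innerSL ℝ v).contDiff).sub contDiff_const))

lemma aux_smooth_convex_approximation [ProperSpace E] (K : Set E)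
    (hKne : K.Nonempty) (hKcomp : IsCompact K) (hKconv : Convex ℝ K)
    (ε : ℝ) (hε : 0 < ε) :
    ∃ (C : Set E) (f : E → ℝ),
      IsCompact C ∧ Convex ℝ C ∧
      ContDiff ℝ (⊤ : ℕ∞) f ∧ C = {x | f x ≤ 0} ∧
      (∀ x, f x = 0 → fderiv ℝ f x ≠ 0) ∧
      K ⊆ C ∧ C ⊆ Metric.cthickening ε K := by
  classical
  obtain ⟨x₀, hx₀⟩ := hKne
  -- bound on K
  obtain ⟨M₀, hM₀⟩ := hKcomp.isBounded.exists_norm_le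
  set M : ℝ := max M₀ 0 with hMdef
  have hM0 : 0 ≤ M := le_max_right _ _
  have hMK : ∀ y ∈ K, ‖y‖ ≤ M := fun y hy => (hM₀ y hy).trans (le_max_left _ _)
  set δ : ℝ := ε / 2 with hδdef
  have hδ : 0 < δ := by positivity
  -- support function
  set H : E → ℝ := fun u => sSup ((fun y => ⟪u, y⟫) '' K) with hHdef
  have himg : ∀ u : E, ((fun y => ⟪u, y⟫) '' K).Nonempty := fun u => ⟨_, x₀, hx₀, rfl⟩
  have hbdd : ∀ u : E, BddAbove ((fun y => ⟪u, y⟫) '' K) := fun u =>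
    (hKcomp.image (continuous_const.inner continuous_id)).bddAbove
  have hHle : ∀ u : E, ∀ y ∈ K, ⟪u, y⟫ ≤ H u := fun u y hy =>
    le_csSup (hbdd u) ⟨y, hy, rfl⟩
  have hHub : ∀ (u : E) (b : ℝ), (∀ y ∈ K, ⟪u, y⟫ ≤ b) → H u ≤ b := by
    intro u b hb
    exact csSup_le (himg u) (by rintro _ ⟨y, hy, rfl⟩; exact hb y hy)
  have hHM : ∀ u : E, H u ≤ M * ‖u‖ := by
    intro u
    refine hHub u _ fun y hy => (real_inner_le_norm u y).trans ?_
    have := hMK y hy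
    have := norm_nonneg u
    nlinarith
  have hHlip : ∀ u v : E, H u ≤ H v + M * ‖u - v‖ := by
    intro u v
    refine hHub u _ fun y hy => ?_
    have h1 : ⟪u, y⟫ = ⟪v, y⟫ + ⟪u - v, y⟫ := by rw [inner_sub_left]; ring
    have h2 := real_inner_le_norm (u - v) y
    have h3 := hHle v y hy
    have h4 := hMK y hy
    have h5 := norm_nonneg (u - v)
    nlinarith
  -- net of sphere
  set τ : ℝ := min (1/2) (δ / (3*M + 2*δ + 1)) with hτdef
  have hτ0 : 0 < τ := lt_min (by norm_num) (by positivity)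
  have hτhalf : τ ≤ 1/2 := min_le_left _ _
  have hτkey : τ * (3*M + 2*δ) ≤ δ := by
    have h1 : τ ≤ δ / (3*M + 2*δ + 1) := min_le_right _ _
    have h2 : (0:ℝ) < 3*M + 2*δ + 1 := by linarith
    rw [le_div_iff₀ h2] at h1
    nlinarith
  obtain ⟨t, ht⟩ := (isCompact_sphere (0:E) 1).elim_finite_subcover
    (fun v : sphere (0:E) 1 => ball (v : E) τ) (fun _ => isOpen_ball)
    (fun u hu => Set.mem_iUnion.2 ⟨⟨u, hu⟩, mem_ball_self hτ0⟩)
  set s : Finset E := t.image Subtype.val with hsdef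
  have hs_sphere : ∀ v ∈ s, ‖v‖ = 1 := by
    intro v hv
    rw [hsdef, Finset.mem_image] at hv
    obtain ⟨w, _, rfl⟩ := hv
    simpa using mem_sphere_zero_iff_norm.1 w.2
  have hs_net : ∀ u : E, ‖u‖ = 1 → ∃ v ∈ s, ‖u - v‖ < τ := by
    intro u hu
    have hu' : u ∈ sphere (0:E) 1 := mem_sphere_zero_iff_norm.2 hu
    have := ht hu'
    rw [Set.mem_iUnion₂] at this
    obtain ⟨i, hi, hball⟩ := this
    exact ⟨(i : E), Finset.mem_image_of_mem _ hi, by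
      rwa [mem_ball, dist_eq_norm] at hball⟩
  -- the function
  set n : ℕ := s.card with hndef
  have hlogn : 0 ≤ Real.log n := by
    rcases Nat.eq_zero_or_pos n with h | h
    · simp [h]
    · exact Real.log_nonneg (by exact_mod_cast h)
  set T : ℝ := (Real.log n + 1) / δ with hTdef
  have hT : 0 < T := div_pos (by linarith) hδ
  have hTδ : T * δ = Real.log n + 1 := div_mul_cancel₀ _ hδ.ne'
  set g : E → ℝ := fun x => ∑ v ∈ s, Real.exp (T * (⟪v, x⟫ - (H v + δ))) with hgdef
  set f : E → ℝ := fun x => g x - 1 with hfdef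
  set C : Set E := {x | f x ≤ 0} with hCdef
  have hg_cd : ContDiff ℝ (⊤ : ℕ∞) g := ContDiff.sum fun v _ => aux_contDiff_exp_inner v T (H v + δ)
  have hf_cd : ContDiff ℝ (⊤ : ℕ∞) f := hg_cd.sub contDiff_const
  have hgconv : ConvexOn ℝ Set.univ g :=
    aux_convexOn_sum s _ fun v _ => aux_convexOn_exp_inner v T (H v + δ)
  -- K ⊆ C, strictly
  have hK_lt : ∀ x ∈ K, g x < 1 := by
    intro x hx
    have hterm : ∀ v ∈ s, Real.exp (T * (⟪v, x⟫ - (H v + δ))) ≤ Real.exp (-(Real.log n + 1)) := by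
      intro v _
      apply Real.exp_le_exp.2
      have h1 : ⟪v, x⟫ - (H v + δ) ≤ -δ := by
        have := hHle v x hx; linarith
      calc T * (⟪v, x⟫ - (H v + δ)) ≤ T * (-δ) := by
            exact mul_le_mul_of_nonneg_left h1 hT.le
        _ = -(Real.log n + 1) := by rw [mul_neg, hTδ]
    have hsum : g x ≤ n * Real.exp (-(Real.log n + 1)) := by
      calc g x ≤ ∑ _v ∈ s, Real.exp (-(Real.log n + 1)) := Finset.sum_le_sum hterm
        _ = n * Real.exp (-(Real.log n + 1)) := by
            rw [Finset.sum_const, hndef, nsmul_eq_mul]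
    rcases Nat.eq_zero_or_pos n with h | h
    · have : g x ≤ 0 := by simpa [h] using hsum
      linarith
    · have hn0 : (0:ℝ) < n := by exact_mod_cast h
      have heq1 : Real.exp (-(Real.log n + 1)) = ((n:ℝ))⁻¹ * Real.exp (-1) := by
        rw [neg_add, Real.exp_add, Real.exp_neg, Real.exp_log hn0]
      have : (n:ℝ) * Real.exp (-(Real.log n + 1)) = Real.exp (-1) := by
        rw [heq1, ← mul_assoc, mul_inv_cancel₀ hn0.ne', one_mul]
      rw [this] at hsum
      have : Real.exp (-1) < 1 := Real.exp_lt_one_iff.2 (by norm_num)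
      linarith
  have hKC : K ⊆ C := fun x hx => by
    have := hK_lt x hx
    simp only [hCdef, hfdef, Set.mem_setOf_eq]
    linarith
  -- points of C satisfy the linear constraints
  have hC_bound : ∀ x ∈ C, ∀ v ∈ s, ⟪v, x⟫ ≤ H v + δ := by
    intro x hx v hv
    have hgx : g x ≤ 1 := by
      have : f x ≤ 0 := hx
      simp only [hfdef] at this
      linarith
    have hterm : Real.exp (T * (⟪v, x⟫ - (H v + δ))) ≤ g x :=
      Finset.single_le_sum (f := fun w => Real.exp (T * (⟪w, x⟫ - (H w + δ))))
        (fun i _ => (Real.exp_pos _).le) hv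
    have := Real.exp_le_one_iff.1 (hterm.trans hgx)
    nlinarith
  -- norm bound on C
  have hC_norm : ∀ x ∈ C, ‖x‖ ≤ 2 * (M + δ) := by
    intro x hx
    by_cases hx0 : x = 0
    · rw [hx0, norm_zero]; positivity
    · have hnx : (0:ℝ) < ‖x‖ := norm_pos_iff.2 hx0
      set u : E := ‖x‖⁻¹ • x with hudef
      have hu1 : ‖u‖ = 1 := by
        rw [hudef, norm_smul, norm_inv, norm_norm, inv_mul_cancel₀ hnx.ne']
      obtain ⟨v, hv, hvu⟩ := hs_net u hu1
      have hux : ⟪u, x⟫ = ‖x‖ := by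
        rw [hudef, real_inner_smul_left, real_inner_self_eq_norm_mul_norm]
        field_simp
      have h1 : ⟪v, x⟫ = ⟪u, x⟫ - ⟪u - v, x⟫ := by rw [inner_sub_left]; ring
      have h2 : |⟪u - v, x⟫| ≤ ‖u - v‖ * ‖x‖ := abs_real_inner_le_norm _ _
      have h3 : ⟪v, x⟫ ≤ H v + δ := hC_bound x hx v hv
      have h4 : H v ≤ M * ‖v‖ := hHM v
      have h5 : ‖v‖ = 1 := hs_sphere v hv
      have h6 := abs_le.1 h2
      nlinarith [hvu.le]
  -- C is in the thickening
  have hCthick : C ⊆ cthickening ε K := by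
    intro x hx
    obtain ⟨p, hpK, hpd⟩ := hKcomp.exists_infDist_eq_dist ⟨x₀, hx₀⟩ x
    refine mem_cthickening_of_dist_le x p ε K hpK ?_
    by_cases hxp : x = p
    · rw [hxp, dist_self]; linarith
    · have hd : (0:ℝ) < ‖x - p‖ := by
        rw [norm_pos_iff, sub_ne_zero]; exact hxp
      have hproj : ∀ y ∈ K, ⟪x - p, y - p⟫ ≤ 0 := by
        apply (norm_eq_iInf_iff_real_inner_le_zero hKconv hpK).1
        rw [← dist_eq_norm, ← hpd, Metric.infDist_eq_iInf]
        congr 1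
        ext w
        rw [dist_eq_norm]
      set u : E := ‖x - p‖⁻¹ • (x - p) with hudef
      have hu1 : ‖u‖ = 1 := by
        rw [hudef, norm_smul, norm_inv, norm_norm, inv_mul_cancel₀ hd.ne']
      obtain ⟨v, hv, hvu⟩ := hs_net u hu1
      have hA : ⟪v, x⟫ ≤ H v + δ := hC_bound x hx v hv
      have hB : H v ≤ H u + M * ‖v - u‖ := hHlip v u
      have hvu' : ‖v - u‖ < τ := by rwa [norm_sub_rev]
      have hC' : H u ≤ ⟪u, p⟫ := by
        refine hHub u _ fun y hy => ?_
        have h1 : ⟪u, y⟫ - ⟪u, p⟫ = ⟪u, y - p⟫ := by rw [inner_sub_right]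
        have h2 : ⟪u, y - p⟫ = ‖x - p‖⁻¹ * ⟪x - p, y - p⟫ := by
          rw [hudef, real_inner_smul_left]
        have h3 := hproj y hy
        have h4 : ‖x - p‖⁻¹ * ⟪x - p, y - p⟫ ≤ 0 :=
          mul_nonpos_of_nonneg_of_nonpos (by positivity) h3
        linarith
      have hD : ⟪u, x⟫ = ⟪u, p⟫ + ‖x - p‖ := by
        have h1 : ⟪u, x⟫ - ⟪u, p⟫ = ⟪u, x - p⟫ := by rw [inner_sub_right]
        have h2 : ⟪u, x - p⟫ = ‖x - p‖⁻¹ * ⟪x - p, x - p⟫ := by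
          rw [hudef, real_inner_smul_left]
        rw [real_inner_self_eq_norm_mul_norm] at h2
        have h3 : ⟪u, x - p⟫ = ‖x - p‖ := by rw [h2]; field_simp
        linarith
      have hE : ⟪v, x⟫ ≥ ⟪u, x⟫ - τ * ‖x‖ := by
        have h1 : ⟪v, x⟫ = ⟪u, x⟫ - ⟪u - v, x⟫ := by rw [inner_sub_left]; ring
        have h2 := abs_le.1 (abs_real_inner_le_norm (u - v) x)
        have h3 : ‖u - v‖ * ‖x‖ ≤ τ * ‖x‖ :=
          mul_le_mul_of_nonneg_right hvu.le (norm_nonneg x)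
        linarith
      have hF : ‖x‖ ≤ 2 * (M + δ) := hC_norm x hx
      have p1 : M * ‖v - u‖ ≤ M * τ := mul_le_mul_of_nonneg_left hvu'.le hM0
      have p2 : τ * ‖x‖ ≤ τ * (2 * (M + δ)) := mul_le_mul_of_nonneg_left hF hτ0.le
      have p3 : M * τ + τ * (2 * (M + δ)) = τ * (3 * M + 2 * δ) := by ring
      rw [dist_eq_norm]
      linarith [hA, hB, hC', hD, hE, p1, p2, p3, hτkey]
  -- compactness and convexity
  have hCclosed : IsClosed C := isClosed_le hf_cd.continuous continuous_const
  have hCcomp : IsCompact C :=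
    Metric.isCompact_of_isClosed_isBounded hCclosed
      ((hKcomp.isBounded.cthickening).subset hCthick)
  have hCconv : Convex ℝ C := by
    have h := hgconv.convex_le 1
    have heq : C = {x ∈ Set.univ | g x ≤ 1} := by
      ext x
      simp [hCdef, hfdef, sub_nonpos]
    rw [heq]
    exact h
  -- nonvanishing derivative
  have hgrad : ∀ x, f x = 0 → fderiv ℝ f x ≠ 0 := by
    intro x hfx hder
    have hgx : g x = 1 := by
      simp only [hfdef] at hfx; linarith
    have hgdiff : DifferentiableAt ℝ g x := (hg_cd.differentiable (by simp)) x
    have hgder : fderiv ℝ g x = 0 := by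
      have : fderiv ℝ f x = fderiv ℝ g x := by
        rw [hfdef]
        exact fderiv_sub_const 1
      rw [← this, hder]
    set φ : ℝ → ℝ := fun θ => g (θ • (x₀ - x) + x) with hφdef
    have hφconv : ConvexOn ℝ Set.univ φ := by
      have h := hgconv.comp_affineMap (AffineMap.lineMap x x₀ : ℝ →ᵃ[ℝ] E)
      rw [Set.preimage_univ] at h
      exact h
    have hcurve : HasDerivAt (fun θ : ℝ => θ • (x₀ - x) + x) (x₀ - x) 0 := by
      have h1 : HasDerivAt (fun θ : ℝ => θ • (x₀ - x)) ((1:ℝ) • (x₀ - x)) 0 :=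
        (hasDerivAt_id 0).smul_const (x₀ - x)
      simpa using h1.add_const x
    have hgF : HasFDerivAt g (0 : E →L[ℝ] ℝ) ((0:ℝ) • (x₀ - x) + x) := by
      have := hgdiff.hasFDerivAt
      rw [hgder] at this
      simpa using this
    have hφder : HasDerivAt φ 0 0 := by
      have := hgF.comp_hasDerivAt 0 hcurve
      simp at this
      exact this
    have hslope := hφconv.le_slope_of_hasDerivAt (Set.mem_univ (0:ℝ)) (Set.mem_univ 1)
      one_pos hφder
    have hφ1 : φ 1 = g x₀ := by simp [hφdef]
    have hφ0 : φ 0 = g x := by simp [hφdef]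
    have hslope' : (0:ℝ) ≤ φ 1 - φ 0 := by
      rw [slope_def_field] at hslope
      simpa using hslope
    rw [hφ1, hφ0] at hslope'
    have hx₀lt := hK_lt x₀ hx₀
    linarith
  exact ⟨C, f, hCcomp, hCconv, hf_cd, rfl, hgrad, hKC, hCthick⟩

end Aux

/-- Let `K ⊆ ℝ^N` be a nonempty compact convex set and `ε > 0`. Then there is a compact
convex set `C` with smooth boundary (i.e. `C = {f ≤ 0}` for a `C^∞` function `f` whose
derivative is nonvanishing on `{f = 0}`) with `K ⊆ C ⊆ K(ε)`, where `K(ε)` is the closed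
`ε`-neighborhood of `K`. -/
theorem smooth_convex_approximation (N : ℕ) (K : Set (EuclideanSpace ℝ (Fin N)))
    (hKne : K.Nonempty) (hKcomp : IsCompact K) (hKconv : Convex ℝ K)
    (ε : ℝ) (hε : 0 < ε) :
    ∃ (C : Set (EuclideanSpace ℝ (Fin N))) (f : EuclideanSpace ℝ (Fin N) → ℝ),
      IsCompact C ∧ Convex ℝ C ∧
      ContDiff ℝ (⊤ : ℕ∞) f ∧ C = {x | f x ≤ 0} ∧
      (∀ x, f x = 0 → fderiv ℝ f x ≠ 0) ∧
      K ⊆ C ∧ C ⊆ Metric.cthickening ε K :=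
  aux_smooth_convex_approximation K hKne hKcomp hKconv ε hε
end
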